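/- arXiv:1210.6749 — 2 statements merged into one kernel-verified Lean document; each statement's English description precedes it below -/
import Mathlib

section
/- Let p ≥ 2. Then for all x > 0, sinh_p(x)/x < (cosh_p(x) + 2)/3. -/
open Real Set Filter Topology

/-- Generalized inverse sine: `arcsin_p x = ∫₀ˣ (1 - tᵖ)^(-1/p) dt`. -/
noncomputable def arcsinp (p : ℝ) (x : ℝ) : ℝ := ∫ t in (0:ℝ)..x, (1 - t ^ p) ^ (-1 / p)

/-- Generalized π: `π_p = 2 · arcsin_p 1`. -/
noncomputable def pip (p : ℝ) : ℝ := 2 * arcsinp p 1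

/-- Generalized sine: the inverse of `arcsinp p` (as a map from `[0,1]`). -/
noncomputable def sinp (p : ℝ) : ℝ → ℝ := Function.invFunOn (arcsinp p) (Set.Icc 0 1)

/-- Generalized cosine. -/
noncomputable def cosp (p : ℝ) (x : ℝ) : ℝ := (1 - (sinp p x) ^ p) ^ (1 / p)

/-- Generalized tangent. -/
noncomputable def tanp (p : ℝ) (x : ℝ) : ℝ := sinp p x / cosp p x

/-- Generalized inverse hyperbolic sine: `arsinh_p x = ∫₀ˣ (1 + tᵖ)^(-1/p) dt`. -/
noncomputable def arsinhp (p : ℝ) (x : ℝ) : ℝ := ∫ t in (0:ℝ)..x, (1 + t ^ p) ^ (-1 / p)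

/-- Generalized hyperbolic sine: the inverse of `arsinhp p` (as a map from `[0,∞)`). -/
noncomputable def sinhp (p : ℝ) : ℝ → ℝ := Function.invFunOn (arsinhp p) (Set.Ici 0)

/-- Generalized hyperbolic cosine. -/
noncomputable def coshp (p : ℝ) (x : ℝ) : ℝ := (1 + (sinhp p x) ^ p) ^ (1 / p)

/-- Generalized hyperbolic tangent. -/
noncomputable def tanhp (p : ℝ) (x : ℝ) : ℝ := sinhp p x / coshp p x

/-!
Put `σ = sinh_p x` and `c(s) = (1 + s^p)^(1/p)`, so that `x = arsinh_p σ` and `cosh_p x = c(σ)`.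
The claim becomes `3σ / (c(σ) + 2) < arsinh_p σ`. The difference
`G(s) = arsinh_p s - 3s / (c(s) + 2)` vanishes at `0`, and since `s c'(s) = c - c^(1-p)`,
`c(c + 2)² G'(s) = (c - 1)² + 3 (1 - c^(2-p))`, which is positive for `s > 0` because `c > 1` and
`p ≥ 2`. That `sinh_p` is a genuine inverse follows from the bound
`arsinh_p x ≥ 2^(-1/p) log x` for `x ≥ 1`.
-/

section GeneralizedHyperbolic

open MeasureTheory

variable {p : ℝ}

lemma continuousOn_one_add_rpow_rpow (hp : 0 ≤ p) (e : ℝ) :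
    ContinuousOn (fun t : ℝ => (1 + t ^ p) ^ e) (Ici 0) := by
  intro t ht
  have ht : 0 ≤ t := ht
  have hpos : 0 < 1 + t ^ p := by positivity
  exact ((continuousAt_const.add (continuousAt_rpow_const t p (Or.inr hp))).rpow_const
    (Or.inl hpos.ne')).continuousWithinAt

lemma intervalIntegrable_one_add_rpow_rpow (hp : 0 ≤ p) (e : ℝ) {a b : ℝ} (ha : 0 ≤ a)
    (hb : 0 ≤ b) : IntervalIntegrable (fun t : ℝ => (1 + t ^ p) ^ e) volume a b :=
  ((continuousOn_one_add_rpow_rpow hp e).mono fun _ ht =>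
    (le_min ha hb).trans ht.1).intervalIntegrable

@[simp] lemma arsinhp_zero : arsinhp p 0 = 0 := intervalIntegral.integral_same

lemma continuousOn_arsinhp (hp : 0 ≤ p) : ContinuousOn (arsinhp p) (Ici 0) := by
  intro x hx
  have hx : 0 ≤ x := hx
  have hIcc := intervalIntegral.continuousOn_primitive_interval'
    (intervalIntegrable_one_add_rpow_rpow hp (-1 / p) le_rfl (by linarith : (0:ℝ) ≤ x + 1))
    left_mem_uIcc
  rw [uIcc_of_le (by linarith)] at hIcc
  refine (hIcc x ⟨hx, by linarith⟩).mono_of_mem_nhdsWithin ?_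
  rw [← Ici_inter_Iic]
  exact inter_mem_nhdsWithin _ (Iic_mem_nhds (by linarith))

lemma hasDerivAt_arsinhp (hp : 0 ≤ p) {x : ℝ} (hx : 0 < x) :
    HasDerivAt (arsinhp p) ((1 + x ^ p) ^ (-1 / p)) x :=
  intervalIntegral.integral_hasDerivAt_right
    (intervalIntegrable_one_add_rpow_rpow hp _ le_rfl hx.le)
    (((continuousOn_one_add_rpow_rpow hp _).mono Ioi_subset_Ici_self).stronglyMeasurableAtFilter
      isOpen_Ioi x hx)
    ((continuousOn_one_add_rpow_rpow hp _).continuousAt (Ici_mem_nhds hx))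

lemma two_rpow_mul_inv_le_one_add_rpow_rpow (hp : 0 < p) {t : ℝ} (ht : 1 ≤ t) :
    2 ^ (-1 / p) * t⁻¹ ≤ (1 + t ^ p) ^ (-1 / p) := by
  have ht0 : 0 < t := one_pos.trans_le ht
  have htp : 1 ≤ t ^ p := one_le_rpow ht hp.le
  calc 2 ^ (-1 / p) * t⁻¹ = (2 * t ^ p) ^ (-1 / p) := by
        rw [mul_rpow two_pos.le (rpow_nonneg ht0.le p), ← rpow_mul ht0.le,
          show p * (-1 / p) = -1 by field_simp, rpow_neg_one]
    _ ≤ (1 + t ^ p) ^ (-1 / p) :=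
        rpow_le_rpow_of_nonpos (by positivity) (by linarith) (by rw [neg_div]; simp [hp.le])

lemma le_arsinhp_exp (hp : 0 < p) {x : ℝ} (hx : 0 ≤ x) :
    x ≤ arsinhp p (exp (2 ^ (1 / p) * x)) := by
  set E := exp (2 ^ (1 / p) * x)
  have hE : 1 ≤ E := one_le_exp (by positivity)
  have hinv : IntervalIntegrable (fun t : ℝ => 2 ^ (-1 / p) * t⁻¹) volume 1 E :=
    (intervalIntegrable_inv_iff.mpr (Or.inr (notMem_uIcc_of_lt one_pos (by linarith)))).const_mul _
  have hlog : ∫ t in (1:ℝ)..E, 2 ^ (-1 / p) * t⁻¹ = x := by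
    rw [intervalIntegral.integral_const_mul, integral_inv_of_pos one_pos (by positivity), div_one,
      log_exp, ← mul_assoc, ← rpow_add two_pos, neg_div, neg_add_cancel, rpow_zero, one_mul]
  have h01 : 0 ≤ arsinhp p 1 :=
    intervalIntegral.integral_nonneg zero_le_one fun t ht =>
      rpow_nonneg (by have := ht.1; positivity) _
  calc x = ∫ t in (1:ℝ)..E, 2 ^ (-1 / p) * t⁻¹ := hlog.symm
    _ ≤ ∫ t in (1:ℝ)..E, (1 + t ^ p) ^ (-1 / p) :=
        intervalIntegral.integral_mono_on hE hinv
          (intervalIntegrable_one_add_rpow_rpow hp.le _ zero_le_one (by linarith))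
          fun t ht => two_rpow_mul_inv_le_one_add_rpow_rpow hp ht.1
    _ ≤ arsinhp p 1 + ∫ t in (1:ℝ)..E, (1 + t ^ p) ^ (-1 / p) := le_add_of_nonneg_left h01
    _ = arsinhp p E := intervalIntegral.integral_add_adjacent_intervals
        (intervalIntegrable_one_add_rpow_rpow hp.le _ le_rfl zero_le_one)
        (intervalIntegrable_one_add_rpow_rpow hp.le _ zero_le_one (by linarith))

lemma surjOn_arsinhp (hp : 0 < p) : SurjOn (arsinhp p) (Ici 0) (Ici 0) := by
  intro x hx
  have hx : 0 ≤ x := hx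
  have hE : 0 ≤ exp (2 ^ (1 / p) * x) := (exp_pos _).le
  obtain ⟨s, hs, rfl⟩ :=
    intermediate_value_Icc hE ((continuousOn_arsinhp hp.le).mono Icc_subset_Ici_self)
    (by rw [arsinhp_zero]; exact ⟨hx, le_arsinhp_exp hp hx⟩ : x ∈ Icc (arsinhp p 0) _)
  exact ⟨s, hs.1, rfl⟩

lemma arsinhp_sinhp (hp : 0 < p) {x : ℝ} (hx : 0 ≤ x) : arsinhp p (sinhp p x) = x :=
  (surjOn_arsinhp hp).rightInvOn_invFunOn hx

lemma sinhp_pos (hp : 0 < p) {x : ℝ} (hx : 0 < x) : 0 < sinhp p x := by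
  refine lt_of_le_of_ne ((surjOn_arsinhp hp).mapsTo_invFunOn hx.le) fun h => hx.ne ?_
  rw [← arsinhp_sinhp hp hx.le, ← h, arsinhp_zero]

lemma one_lt_one_add_rpow_rpow_inv (hp : 0 < p) {x : ℝ} (hx : 0 < x) :
    1 < (1 + x ^ p) ^ (1 / p) :=
  one_lt_rpow (lt_add_of_pos_right 1 (rpow_pos_of_pos hx p)) (by positivity)

lemma hasDerivAt_one_add_rpow_rpow_inv (hp : 0 < p) {x : ℝ} (hx : 0 < x) :
    HasDerivAt (fun s : ℝ => (1 + s ^ p) ^ (1 / p))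
      (((1 + x ^ p) ^ (1 / p) - ((1 + x ^ p) ^ (1 / p)) ^ (1 - p)) / x) x := by
  have hb : 0 < 1 + x ^ p := by positivity
  convert (((hasDerivAt_rpow_const (Or.inl hx.ne')).const_add 1).rpow_const
    (p := 1 / p) (Or.inl hb.ne')) using 1
  rw [← rpow_mul hb.le, show 1 / p * (1 - p) = 1 / p - 1 by field_simp,
    rpow_sub_one hb.ne', rpow_sub_one hx.ne']
  field_simp
  ring

lemma three_mul_two_add_rpow_lt_sq (hp : 2 ≤ p) {c : ℝ} (hc : 1 < c) :
    3 * c * (2 + c ^ (1 - p)) < (c + 2) ^ 2 := by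
  have hc0 : 0 < c := one_pos.trans hc
  have h : c * c ^ (1 - p) ≤ 1 := by
    have hadd := rpow_add hc0 1 (1 - p)
    rw [rpow_one] at hadd
    rw [← hadd]
    exact rpow_le_one_of_one_le_of_nonpos hc.le (by linarith)
  nlinarith

lemma strictMonoOn_arsinhp_sub_three_mul_div (hp : 2 ≤ p) :
    StrictMonoOn (fun s => arsinhp p s - 3 * s / ((1 + s ^ p) ^ (1 / p) + 2)) (Ici 0) := by
  have hp0 : 0 < p := two_pos.trans_le hp
  refine strictMonoOn_of_deriv_pos (convex_Ici 0) ?_ fun x hx => ?_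
  · refine (continuousOn_arsinhp hp0.le).sub <| (continuousOn_const.mul continuousOn_id).div
      ((continuousOn_one_add_rpow_rpow hp0.le _).add continuousOn_const) fun s hs => ?_
    have : 0 ≤ s := hs
    positivity
  rw [interior_Ici] at hx
  have hx : 0 < x := hx
  set c := (1 + x ^ p) ^ (1 / p)
  have hc1 : 1 < c := one_lt_one_add_rpow_rpow_inv hp0 hx
  have hrpow_neg : (1 + x ^ p) ^ (-1 / p) = c⁻¹ := by rw [neg_div, rpow_neg (by positivity)]
  have hderiv : HasDerivAt (fun s => arsinhp p s - 3 * s / ((1 + s ^ p) ^ (1 / p) + 2))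
      (c⁻¹ - 3 * (2 + c ^ (1 - p)) / (c + 2) ^ 2) x := by
    refine ((hasDerivAt_arsinhp hp0.le hx).sub (((hasDerivAt_id' x).const_mul 3).div
      ((hasDerivAt_one_add_rpow_rpow_inv hp0 hx).add_const 2) (by positivity))).congr_deriv ?_
    rw [hrpow_neg]
    field_simp
    ring
  rw [hderiv.deriv, sub_pos, inv_eq_one_div, div_lt_div_iff₀ (by positivity) (by positivity)]
  linarith [three_mul_two_add_rpow_lt_sq hp hc1]

lemma three_mul_div_lt_arsinhp (hp : 2 ≤ p) {s : ℝ} (hs : 0 < s) :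
    3 * s / ((1 + s ^ p) ^ (1 / p) + 2) < arsinhp p s := by
  simpa only [arsinhp_zero, mul_zero, zero_div, sub_zero, sub_pos] using
    strictMonoOn_arsinhp_sub_three_mul_div hp self_mem_Ici hs.le hs

end GeneralizedHyperbolic

theorem stmt13 (p : ℝ) (hp : 2 ≤ p) :
    ∀ x > (0:ℝ), sinhp p x / x < (coshp p x + 2) / 3 := by
  intro x hx
  have hp0 : 0 < p := two_pos.trans_le hp
  have hσ0 := sinhp_pos hp0 hx
  have hσ := three_mul_div_lt_arsinhp hp hσ0
  rw [arsinhp_sinhp hp0 hx.le, div_lt_iff₀ (by positivity)] at hσ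
  rw [coshp, div_lt_div_iff₀ hx three_pos]
  linarith
end

section
/- Let p ≥ 2. Then for all x ∈ (0, π_p/2], sin_p(x)/x > (p − 1 + cos_p(x))/p ≥ (1 + cos_p(x))/2. -/
open Real Set Filter Topology

/-! Write `s = sin_p x`, so that `x = arcsin_p s` and `cos_p x = (1 - s^p)^(1/p)`. The first inequality
becomes `arcsin_p s < p s / (p - 1 + (1 - s^p)^(1/p))`; both sides vanish at `s = 0`, and with
`c = (1 - s^p)^(1/p)` the comparison of their derivatives reduces to
`(p - 1 + c)^2 < p c (p - 1 + c^(1-p))`, which follows from the Bernoulli-type bound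
`c^(2-p) ≥ 1 + (p - 2)(1 - c)`. The second inequality is `(p - 2)(1 - cos_p x) ≥ 0`. -/

open MeasureTheory

theorem Real.one_add_mul_one_sub_le_rpow_neg {c q : ℝ} (hc : 0 < c) (hq : 0 ≤ q) :
    1 + q * (1 - c) ≤ c ^ (-q) := by
  have hlog : q * (1 - c) ≤ log c * -q := by
    nlinarith [mul_le_mul_of_nonneg_left (log_le_sub_one_of_pos hc) hq]
  rw [rpow_def_of_pos hc]
  linarith [add_one_le_exp (log c * -q)]

theorem sq_lt_mul_sub_one_add_rpow {p c : ℝ} (hp : 2 ≤ p) (hc0 : 0 < c) (hc1 : c < 1) :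
    (p - 1 + c) ^ 2 < p * c * (p - 1 + c ^ (1 - p)) := by
  have hmul : c * c ^ (1 - p) = c ^ (-(p - 2)) := by
    rw [show -(p - 2) = 1 + (1 - p) by ring, rpow_add hc0, rpow_one]
  have hbern := one_add_mul_one_sub_le_rpow_neg hc0 (q := p - 2) (by linarith)
  -- The Bernoulli bound leaves the margin `(1 - c) * (p - 1 + c)`.
  nlinarith [mul_pos (sub_pos.2 hc1) (by linarith : 0 < p - 1 + c)]

section arcsinp

variable {p : ℝ}

theorem continuousAt_arcsinp_integrand (hp : 0 < p) {t : ℝ} (ht : t ∈ Ioo (0 : ℝ) 1) :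
    ContinuousAt (fun t : ℝ => (1 - t ^ p) ^ (-1 / p)) t := by
  have htp : t ^ p < 1 := rpow_lt_one ht.1.le ht.2 hp
  exact (continuousAt_const.sub (continuousAt_rpow_const t p (Or.inr hp.le))).rpow_const
    (Or.inl (sub_ne_zero.2 htp.ne'))

/-- The integrand is dominated by the integrable `(1 - t) ^ (-1 / p)` because `t ^ p ≤ t`. -/
theorem intervalIntegrable_arcsinp_integrand (hp : 1 < p) :
    IntervalIntegrable (fun t : ℝ => (1 - t ^ p) ^ (-1 / p)) volume 0 1 := by
  have hp0 : 0 < p := by linarith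
  have hexp : -1 / p ≤ 0 := div_nonpos_of_nonpos_of_nonneg (by norm_num) hp0.le
  have hdom : IntervalIntegrable (fun t : ℝ => (1 - t) ^ (-1 / p)) volume 0 1 := by
    have h := (intervalIntegral.intervalIntegrable_rpow' (a := 0) (b := 1) (r := -1 / p)
      (by rw [neg_div, neg_lt_neg_iff, div_lt_one hp0]; exact hp)).comp_sub_left 1
    norm_num at h
    exact h.symm
  have hmeas : AEStronglyMeasurable (fun t : ℝ => (1 - t ^ p) ^ (-1 / p))
      (volume.restrict (uIoc (0 : ℝ) 1)) := by
    rw [uIoc_of_le zero_le_one, ← Measure.restrict_congr_set Ioo_ae_eq_Ioc]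
    exact (continuousOn_of_forall_continuousAt fun t ht =>
      continuousAt_arcsinp_integrand hp0 ht).aestronglyMeasurable measurableSet_Ioo
  refine hdom.mono_fun hmeas ?_
  rw [uIoc_of_le zero_le_one, EventuallyLE, ae_restrict_iff' measurableSet_Ioc]
  refine ae_of_all _ fun t ⟨ht0, ht1⟩ => ?_
  rw [norm_of_nonneg (rpow_nonneg (sub_nonneg.2 (rpow_le_one ht0.le ht1 hp0.le)) _),
    norm_of_nonneg (rpow_nonneg (sub_nonneg.2 ht1) _)]
  rcases ht1.eq_or_lt with rfl | ht1
  · simp [zero_rpow (div_ne_zero (by norm_num : (-1 : ℝ) ≠ 0) hp0.ne')]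
  · have htp : t ^ p ≤ t := by
      simpa using rpow_le_rpow_of_exponent_ge ht0 ht1.le hp.le
    exact rpow_le_rpow_of_nonpos (by linarith) (by linarith) hexp

theorem arcsinp_zero : arcsinp p 0 = 0 := intervalIntegral.integral_same

theorem arcsinp_one : arcsinp p 1 = pip p / 2 := by
  rw [pip]; ring

theorem continuousOn_arcsinp (hp : 1 < p) : ContinuousOn (arcsinp p) (Icc 0 1) := by
  have h := intervalIntegral.continuousOn_primitive_interval'
    (intervalIntegrable_arcsinp_integrand hp) (left_mem_uIcc (a := (0 : ℝ)) (b := 1))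
  rwa [uIcc_of_le zero_le_one] at h

theorem hasDerivAt_arcsinp (hp : 1 < p) {y : ℝ} (hy : y ∈ Ioo (0 : ℝ) 1) :
    HasDerivAt (arcsinp p) ((1 - y ^ p) ^ (-1 / p)) y := by
  have hp0 : 0 < p := by linarith
  refine intervalIntegral.integral_hasDerivAt_right
    ((intervalIntegrable_arcsinp_integrand hp).mono_set ?_)
    ((ContinuousOn.stronglyMeasurableAtFilter isOpen_Ioo fun t ht =>
      (continuousAt_arcsinp_integrand hp0 ht).continuousWithinAt) y hy)
    (continuousAt_arcsinp_integrand hp0 hy)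
  rw [uIcc_of_le hy.1.le, uIcc_of_le zero_le_one]
  exact Icc_subset_Icc le_rfl hy.2.le

theorem exists_arcsinp_eq (hp : 1 < p) {x : ℝ} (hx : x ∈ Icc 0 (pip p / 2)) :
    ∃ s ∈ Icc (0 : ℝ) 1, arcsinp p s = x :=
  intermediate_value_Icc zero_le_one (continuousOn_arcsinp hp)
    (by rwa [arcsinp_zero, arcsinp_one])

theorem sinp_mem_Icc (hp : 1 < p) {x : ℝ} (hx : x ∈ Icc 0 (pip p / 2)) :
    sinp p x ∈ Icc 0 1 :=
  Function.invFunOn_mem (exists_arcsinp_eq hp hx)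

theorem arcsinp_sinp (hp : 1 < p) {x : ℝ} (hx : x ∈ Icc 0 (pip p / 2)) :
    arcsinp p (sinp p x) = x :=
  Function.invFunOn_eq (exists_arcsinp_eq hp hx)

theorem sinp_pos (hp : 1 < p) {x : ℝ} (hx : x ∈ Ioc 0 (pip p / 2)) : 0 < sinp p x := by
  refine (sinp_mem_Icc hp (Ioc_subset_Icc_self hx)).1.lt_of_ne fun h => hx.1.ne ?_
  rw [← arcsinp_sinp hp (Ioc_subset_Icc_self hx), ← h, arcsinp_zero]

theorem cosp_mem_Icc (hp : 1 < p) {x : ℝ} (hx : x ∈ Icc 0 (pip p / 2)) : cosp p x ∈ Icc 0 1 := by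
  obtain ⟨hs0, hs1⟩ := sinp_mem_Icc hp hx
  have hsp : 0 ≤ 1 - sinp p x ^ p := sub_nonneg.2 (rpow_le_one hs0 hs1 (by linarith))
  exact ⟨rpow_nonneg hsp _, rpow_le_one hsp (sub_le_self _ (rpow_nonneg hs0 p)) (by positivity)⟩

end arcsinp

theorem hasDerivAt_one_sub_rpow_rpow_one_div {p y : ℝ} (hp : 0 < p) (hy : y ∈ Ioo (0 : ℝ) 1) :
    HasDerivAt (fun y => (1 - y ^ p) ^ (1 / p)) (-(y ^ (p - 1) * ((1 - y ^ p) ^ (1 / p)) ^ (1 - p)))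
      y := by
  have hu : 0 < 1 - y ^ p := sub_pos.2 (rpow_lt_one hy.1.le hy.2 hp)
  have h := ((hasDerivAt_rpow_const (p := p) (Or.inl hy.1.ne')).const_sub 1).rpow_const
    (p := 1 / p) (Or.inl hu.ne')
  refine h.congr_deriv ?_
  rw [← rpow_mul hu.le, show 1 / p * (1 - p) = 1 / p - 1 by field_simp]
  field_simp

noncomputable def arcsinpMajorant (p y : ℝ) : ℝ := p * y / (p - 1 + (1 - y ^ p) ^ (1 / p))

section arcsinpMajorant

variable {p : ℝ}

theorem arcsinpMajorant_zero : arcsinpMajorant p 0 = 0 := by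
  simp [arcsinpMajorant]

theorem continuousOn_arcsinpMajorant (hp : 1 < p) : ContinuousOn (arcsinpMajorant p) (Icc 0 1) := by
  have hp0 : 0 < p := by linarith
  refine (continuousOn_const.mul continuousOn_id).div (continuousOn_const.add ?_) fun y hy => ?_
  · exact ((continuousOn_const.sub (continuousOn_id.rpow_const fun _ _ => Or.inr hp0.le))).rpow_const
      fun _ _ => Or.inr (by positivity)
  · have : 0 ≤ (1 - y ^ p) ^ (1 / p) :=
      rpow_nonneg (sub_nonneg.2 (rpow_le_one hy.1 hy.2 hp0.le)) _
    linarith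

theorem hasDerivAt_arcsinpMajorant (hp : 1 < p) {y : ℝ} (hy : y ∈ Ioo (0 : ℝ) 1) :
    HasDerivAt (arcsinpMajorant p)
      (p * (p - 1 + ((1 - y ^ p) ^ (1 / p)) ^ (1 - p)) / (p - 1 + (1 - y ^ p) ^ (1 / p)) ^ 2) y := by
  have hp0 : 0 < p := by linarith
  have hu : 0 < 1 - y ^ p := sub_pos.2 (rpow_lt_one hy.1.le hy.2 hp0)
  set c := (1 - y ^ p) ^ (1 / p) with hc
  have hc0 : 0 < c := rpow_pos_of_pos hu _
  have hcp : c ^ p = 1 - y ^ p := by rw [hc, one_div, rpow_inv_rpow hu.le hp0.ne']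
  have hyp : y * y ^ (p - 1) = y ^ p := by
    rw [← rpow_one_add' hy.1.le (by linarith)]; ring_nf
  have hcc : c ^ p * c ^ (1 - p) = c := by
    rw [← rpow_add hc0]; ring_nf; exact rpow_one c
  have h := ((hasDerivAt_id' y).const_mul p).div
    ((hasDerivAt_one_sub_rpow_rpow_one_div hp0 hy).const_add (p - 1))
    (by rw [← hc]; linarith)
  refine h.congr_deriv ?_
  rw [← hc]
  congr 1
  -- `y ^ p = 1 - c ^ p` turns the numerator into `p * (p - 1 + c ^ (1 - p))`.
  linear_combination p * c ^ (1 - p) * hyp + p * c ^ (1 - p) * hcp - p * hcc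

theorem strictMonoOn_arcsinpMajorant_sub_arcsinp (hp : 2 ≤ p) :
    StrictMonoOn (arcsinpMajorant p - arcsinp p) (Icc 0 1) := by
  have hp1 : 1 < p := by linarith
  refine strictMonoOn_of_deriv_pos (convex_Icc 0 1)
    ((continuousOn_arcsinpMajorant hp1).sub (continuousOn_arcsinp hp1)) fun y hy => ?_
  rw [interior_Icc] at hy
  have hu0 : 0 < 1 - y ^ p := sub_pos.2 (rpow_lt_one hy.1.le hy.2 (by linarith))
  have hu1 : 1 - y ^ p < 1 := sub_lt_self _ (rpow_pos_of_pos hy.1 p)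
  set c := (1 - y ^ p) ^ (1 / p)
  have hc0 : 0 < c := rpow_pos_of_pos hu0 _
  have hc1 : c < 1 := rpow_lt_one hu0.le hu1 (by positivity)
  have hinv : (1 - y ^ p) ^ (-1 / p) = 1 / c := by
    rw [neg_div, rpow_neg hu0.le, one_div c]
  rw [((hasDerivAt_arcsinpMajorant hp1 hy).sub (hasDerivAt_arcsinp hp1 hy)).deriv, hinv, sub_pos,
    div_lt_div_iff₀ hc0 (by positivity)]
  linarith [sq_lt_mul_sub_one_add_rpow hp hc0 hc1]

theorem arcsinp_lt_arcsinpMajorant (hp : 2 ≤ p) {s : ℝ} (hs : s ∈ Ioc (0 : ℝ) 1) :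
    arcsinp p s < arcsinpMajorant p s := by
  have h := strictMonoOn_arcsinpMajorant_sub_arcsinp hp ⟨le_rfl, zero_le_one⟩ (Ioc_subset_Icc_self hs)
    hs.1
  rw [Pi.sub_apply, Pi.sub_apply, arcsinpMajorant_zero, arcsinp_zero, sub_zero, sub_pos] at h
  exact h

end arcsinpMajorant

theorem stmt15 (p : ℝ) (hp : 2 ≤ p) :
    ∀ x ∈ Set.Ioc 0 (pip p / 2),
      sinp p x / x > (p - 1 + cosp p x) / p ∧
      (p - 1 + cosp p x) / p ≥ (1 + cosp p x) / 2 := by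
  intro x hx
  have hp1 : 1 < p := by linarith
  have hxI : x ∈ Icc 0 (pip p / 2) := Ioc_subset_Icc_self hx
  obtain ⟨hcos0, hcos1⟩ := cosp_mem_Icc hp1 hxI
  have hbound : x < p * sinp p x / (p - 1 + cosp p x) := by
    have h := arcsinp_lt_arcsinpMajorant hp ⟨sinp_pos hp1 hx, (sinp_mem_Icc hp1 hxI).2⟩
    rwa [arcsinp_sinp hp1 hxI] at h
  rw [lt_div_iff₀ (by linarith)] at hbound
  constructor
  · rw [gt_iff_lt, div_lt_div_iff₀ (by linarith) hx.1]
    linarith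
  · rw [ge_iff_le, div_le_div_iff₀ two_pos (by linarith)]
    nlinarith
end
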